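/- Differentiability of the Moreau envelope: for j : ℝ → [0,∞] proper convex lsc with subdifferential β = ∂j, the Moreau envelope j_λ is convex, differentiable on ℝ, and j_λ' = β_λ (the Yosida approximation of β), for every λ > 0. -/
import Mathlib


open scoped ENNReal

set_option maxHeartbeats 2000000 in
/-- Differentiability of the Moreau envelope: for `j : ℝ → [0,∞]` proper
convex lsc, the Moreau envelope `j_λ(x) = inf_y (|x−y|²/(2λ) + j y)`
(with the infimum attained at the resolvent point `J x`) is convex and
differentiable on `ℝ` with derivative the Yosida approximation
`β_λ(x) = (x − J x)/λ`. -/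
theorem moreau_envelope_differentiable
    (j : ℝ → ℝ≥0∞) (hproper : ∃ x, j x ≠ ⊤)
    (hconv : ∀ x y t : ℝ, 0 ≤ t → t ≤ 1 →
      j (t * x + (1 - t) * y) ≤ ENNReal.ofReal t * j x + ENNReal.ofReal (1 - t) * j y)
    (hlsc : LowerSemicontinuous j)
    (lam : ℝ) (hlam : 0 < lam)
    (jmor : ℝ → ℝ≥0∞)
    (hjmor : ∀ x, jmor x = ⨅ y : ℝ, (ENNReal.ofReal ((x - y) ^ 2 / (2 * lam)) + j y))
    (J : ℝ → ℝ)
    (hJ : ∀ x, jmor x = ENNReal.ofReal ((x - J x) ^ 2 / (2 * lam)) + j (J x)) :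
    ConvexOn ℝ Set.univ (fun x => (jmor x).toReal) ∧
      ∀ x : ℝ, HasDerivAt (fun x => (jmor x).toReal) ((x - J x) / lam) x := by
  obtain ⟨x₀, hx₀⟩ := hproper
  have h2lam : (0:ℝ) < 2 * lam := by linarith
  have hfin : ∀ x, jmor x ≠ ⊤ := by
    intro x
    have h1 : jmor x ≤ ENNReal.ofReal ((x - x₀) ^ 2 / (2 * lam)) + j x₀ := by
      rw [hjmor]; exact iInf_le _ x₀
    exact ne_top_of_le_ne_top (ENNReal.add_ne_top.2 ⟨ENNReal.ofReal_ne_top, hx₀⟩) h1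
  have hJfin : ∀ x, j (J x) ≠ ⊤ := by
    intro x h
    exact hfin x (by rw [hJ x, h]; simp)
  set φ : ℝ → ℝ := fun x => (jmor x).toReal with hφ
  have hφeq : ∀ x, φ x = (x - J x) ^ 2 / (2 * lam) + (j (J x)).toReal := by
    intro x
    rw [hφ]
    simp only
    rw [hJ x, ENNReal.toReal_add ENNReal.ofReal_ne_top (hJfin x),
      ENNReal.toReal_ofReal (by positivity)]
  have hle : ∀ x z, j z ≠ ⊤ → φ x ≤ (x - z) ^ 2 / (2 * lam) + (j z).toReal := by
    intro x z hz
    have h1 : jmor x ≤ ENNReal.ofReal ((x - z) ^ 2 / (2 * lam)) + j z := by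
      rw [hjmor]; exact iInf_le _ z
    have h2 := (ENNReal.toReal_le_toReal (hfin x)
      (ENNReal.add_ne_top.2 ⟨ENNReal.ofReal_ne_top, hz⟩)).2 h1
    rwa [ENNReal.toReal_add ENNReal.ofReal_ne_top hz,
      ENNReal.toReal_ofReal (by positivity)] at h2
  have hjreal : ∀ u v s : ℝ, 0 ≤ s → s ≤ 1 → j u ≠ ⊤ → j v ≠ ⊤ →
      j (s * u + (1 - s) * v) ≠ ⊤ ∧
        (j (s * u + (1 - s) * v)).toReal ≤ s * (j u).toReal + (1 - s) * (j v).toReal := by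
    intro u v s hs hs1 hu hv
    have h := hconv u v s hs hs1
    have hu' : ENNReal.ofReal s * j u ≠ ⊤ := ENNReal.mul_ne_top ENNReal.ofReal_ne_top hu
    have hv' : ENNReal.ofReal (1 - s) * j v ≠ ⊤ := ENNReal.mul_ne_top ENNReal.ofReal_ne_top hv
    have hrhs : ENNReal.ofReal s * j u + ENNReal.ofReal (1 - s) * j v ≠ ⊤ :=
      ENNReal.add_ne_top.2 ⟨hu', hv'⟩
    refine ⟨ne_top_of_le_ne_top hrhs h, ?_⟩
    have h2 := (ENNReal.toReal_le_toReal (ne_top_of_le_ne_top hrhs h) hrhs).2 h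
    rwa [ENNReal.toReal_add hu' hv', ENNReal.toReal_mul, ENNReal.toReal_mul,
      ENNReal.toReal_ofReal hs, ENNReal.toReal_ofReal (by linarith)] at h2
  have hmul : ∀ p q r : ℝ, p ≤ q / (2 * lam) + r → 2 * lam * p ≤ q + 2 * lam * r := by
    intro p q r h
    have h' := mul_le_mul_of_nonneg_left h h2lam.le
    have he : 2 * lam * (q / (2 * lam) + r) = q + 2 * lam * r := by
      field_simp
    linarith
  have hmuleq : ∀ p q r : ℝ, p = q / (2 * lam) + r → 2 * lam * p = q + 2 * lam * r := by
    intro p q r h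
    rw [h]
    field_simp
  -- key monotonicity-type inequality for the resolvent
  have hkey : ∀ x y : ℝ, (J y - J x) ^ 2 ≤ (J y - J x) * (y - x) := by
    intro x y
    have hstep : ∀ t : ℝ, 0 < t → t ≤ 1 →
        0 ≤ (J y - J x) * (y - x) - (J y - J x) ^ 2 + t * (J y - J x) ^ 2 := by
      intro t ht ht1
      have hc1 := hjreal (J y) (J x) t ht.le ht1 (hJfin y) (hJfin x)
      have hc2 := hjreal (J x) (J y) t ht.le ht1 (hJfin x) (hJfin y)
      have m1 := hmul _ _ _ (hle x (t * J y + (1 - t) * J x) hc1.1)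
      have m2 := hmul _ _ _ (hle y (t * J x + (1 - t) * J y) hc2.1)
      have e1 := hmuleq _ _ _ (hφeq x)
      have e2 := hmuleq _ _ _ (hφeq y)
      have hb1 := mul_le_mul_of_nonneg_left hc1.2 h2lam.le
      have hb2 := mul_le_mul_of_nonneg_left hc2.2 h2lam.le
      have h3 : 0 ≤ 2 * t * ((J y - J x) * (y - x) - (J y - J x) ^ 2 + t * (J y - J x) ^ 2) := by
        nlinarith [m1, m2, e1, e2, hb1, hb2]
      by_contra hG
      push_neg at hG
      nlinarith [h3, mul_pos ht (neg_pos.2 hG)]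
    by_contra hcon
    push_neg at hcon
    have hd : J y - J x ≠ 0 := by
      intro h
      rw [h] at hcon
      simp at hcon
    have hd2 : 0 < (J y - J x) ^ 2 := by positivity
    have hcpos : 0 < (J y - J x) ^ 2 - (J y - J x) * (y - x) := by linarith
    set c := (J y - J x) ^ 2 - (J y - J x) * (y - x) with hc
    set t := min 1 (c / (2 * (J y - J x) ^ 2)) with htdef
    have ht0 : 0 < t := lt_min one_pos (by positivity)
    have hst := hstep t ht0 (min_le_left _ _)
    have htle : t ≤ c / (2 * (J y - J x) ^ 2) := min_le_right _ _
    have htd : t * (J y - J x) ^ 2 ≤ c / 2 := by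
      calc t * (J y - J x) ^ 2 ≤ (c / (2 * (J y - J x) ^ 2)) * (J y - J x) ^ 2 :=
            mul_le_mul_of_nonneg_right htle (sq_nonneg _)
        _ = c / 2 := by field_simp
    linarith
  have hnonexp : ∀ x y : ℝ, (J y - J x) ^ 2 ≤ (y - x) ^ 2 := by
    intro x y
    nlinarith [hkey x y, sq_nonneg (J y - J x - (y - x))]
  constructor
  · -- convexity
    refine ⟨convex_univ, ?_⟩
    intro a _ b _ s t hs ht hst
    have hts : t = 1 - s := by linarith
    subst hts
    simp only [smul_eq_mul]
    have hs1 : s ≤ 1 := by linarith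
    have hz := hjreal (J a) (J b) s hs hs1 (hJfin a) (hJfin b)
    have h := hle (s * a + (1 - s) * b) (s * J a + (1 - s) * J b) hz.1
    have hsq : (s * (a - J a) + (1 - s) * (b - J b)) ^ 2
        ≤ s * (a - J a) ^ 2 + (1 - s) * (b - J b) ^ 2 := by
      nlinarith [sq_nonneg ((a - J a) - (b - J b)), mul_nonneg hs ht]
    have hdiv : (s * (a - J a) + (1 - s) * (b - J b)) ^ 2 / (2 * lam)
        ≤ (s * (a - J a) ^ 2 + (1 - s) * (b - J b) ^ 2) / (2 * lam) := by
      gcongr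
    have harg : s * a + (1 - s) * b - (s * J a + (1 - s) * J b)
        = s * (a - J a) + (1 - s) * (b - J b) := by ring
    rw [harg] at h
    have hfinal : (s * (a - J a) ^ 2 + (1 - s) * (b - J b) ^ 2) / (2 * lam)
        + (s * (j (J a)).toReal + (1 - s) * (j (J b)).toReal)
        = s * φ a + (1 - s) * φ b := by
      rw [hφeq a, hφeq b]
      field_simp
      ring
    calc φ (s * a + (1 - s) * b)
        ≤ (s * (a - J a) + (1 - s) * (b - J b)) ^ 2 / (2 * lam)
          + (j (s * J a + (1 - s) * J b)).toReal := h
      _ ≤ (s * (a - J a) ^ 2 + (1 - s) * (b - J b) ^ 2) / (2 * lam)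
          + (s * (j (J a)).toReal + (1 - s) * (j (J b)).toReal) := by
          have := hz.2
          linarith
      _ = s * φ a + (1 - s) * φ b := hfinal
  · -- differentiability
    intro x
    rw [hasDerivAt_iff_isLittleO]
    simp only [smul_eq_mul]
    have herr : ∀ y : ℝ, |φ y - φ x - (y - x) * ((x - J x) / lam)|
        ≤ 5 / (2 * lam) * (y - x) ^ 2 := by
      intro y
      have m1 := hmul _ _ _ (hle y (J x) (hJfin x))
      have m2 := hmuleq _ _ _ (hφeq x)
      have m3 := hmul _ _ _ (hle x (J y) (hJfin y))
      have m4 := hmuleq _ _ _ (hφeq y)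
      have m5 := hnonexp x y
      have h2 : (φ y - φ x - (y - x) * ((x - J x) / lam)) * (2 * lam)
          = 2 * lam * φ y - 2 * lam * φ x - 2 * (y - x) * (x - J x) := by
        field_simp
      rw [abs_le]
      constructor
      · rw [show -(5 / (2 * lam) * (y - x) ^ 2) = (-(5 * (y - x) ^ 2)) / (2 * lam) by ring,
          div_le_iff₀ h2lam, h2]
        nlinarith [m3, m4, m5, sq_nonneg ((y - x) - (J y - J x))]
      · rw [show 5 / (2 * lam) * (y - x) ^ 2 = 5 * (y - x) ^ 2 / (2 * lam) by ring,
          le_div_iff₀ h2lam, h2]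
        nlinarith [m1, m2, sq_nonneg (y - x)]
    have h1 : (fun y => φ y - φ x - (y - x) * ((x - J x) / lam))
        =O[nhds x] (fun y => (y - x) ^ 2) := by
      apply Asymptotics.IsBigO.of_bound (5 / (2 * lam))
      filter_upwards with y
      rw [Real.norm_eq_abs, Real.norm_eq_abs, abs_of_nonneg (sq_nonneg (y - x))]
      exact herr y
    have h3 : (fun y : ℝ => y - x) =o[nhds x] (fun _ => (1 : ℝ)) := by
      rw [Asymptotics.isLittleO_one_iff]
      have : Filter.Tendsto (fun y : ℝ => y - x) (nhds x) (nhds (x - x)) :=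
        (continuous_id.tendsto x).sub tendsto_const_nhds
      rw [sub_self] at this
      exact this
    have h2 : (fun y : ℝ => (y - x) ^ 2) =o[nhds x] (fun y => y - x) := by
      have := (Asymptotics.isBigO_refl (fun y : ℝ => y - x) (nhds x)).mul_isLittleO h3
      simpa only [mul_one, ← pow_two] using this
    exact h1.trans_isLittleO h2
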